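/- arXiv:1504.03019 — 10 statements merged into one kernel-verified Lean document; each statement's English description precedes it below -/
import Mathlib

section
/- Let ({\cal A}, \mu, \alpha, 1) be a unital multiplicative Hom-associative algebra, and let x be a central element with \alpha = L_x (left multiplication by x). Then x^2 = x, and setting y = 1 - x, the subspace Ax is a unital associative algebra with unit x, Ay is a unital algebra with unit y, and A decomposes as the algebra direct sum Ax \oplus Ay with \alpha equal to the projection onto Ax. -/
/-- Decomposition of a unital multiplicative Hom-associative algebra: with `α = L_x`
for a central `x`, one has `x² = x`, `Ax` is a unital associative algebra with unit `x`,
`Ay` (for `y = 1 - x`) is a unital algebra with unit `y`, `A` is the algebra direct sum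
`Ax ⊕ Ay`, and `α` is the projection onto `Ax`. -/
theorem stmt_3 {k A : Type*} [Field k] [NonUnitalNonAssocRing A] [Module k A]
    [SMulCommClass k A A] [IsScalarTower k A A]
    (α : A →ₗ[k] A)
    (hassoc : ∀ a b c : A, α a * (b * c) = (a * b) * α c)
    (hmul : ∀ a b : A, α (a * b) = α a * α b)
    (e : A) (hel : ∀ a : A, e * a = a) (her : ∀ a : A, a * e = a)
    (x : A) (hx : ∀ a : A, α a = x * a) (hcentral : ∀ a : A, x * a = a * x) :
    x * x = x ∧
    (∀ a b c : A, (a * x) * ((b * x) * (c * x)) = ((a * x) * (b * x)) * (c * x)) ∧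
    (∀ a : A, x * (a * x) = a * x ∧ (a * x) * x = a * x) ∧
    (∀ a : A, (e - x) * (a * (e - x)) = a * (e - x) ∧ (a * (e - x)) * (e - x) = a * (e - x)) ∧
    (∀ a : A, a = a * x + a * (e - x)) ∧
    (∀ a b : A, a * x = b * (e - x) → a * x = 0) ∧
    (∀ a b : A, (a * x) * (b * (e - x)) = 0 ∧ (b * (e - x)) * (a * x) = 0) ∧
    (∀ a b : A, α (a * x + b * (e - x)) = a * x) := by
  have hαe : α e = x := by rw [hx, her]
  have hxx : x * x = x := by
    have h := hmul e e
    rw [hel, hαe] at h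
    exact h.symm
  -- (x*a)*b = x*(a*b)
  have move1 : ∀ a b : A, (x * a) * b = x * (a * b) := by
    intro a b
    have h := hassoc a b e
    rw [hx a, hαe, her b, ← hcentral] at h
    exact h
  -- x*(b*c) = b*(x*c)
  have move2 : ∀ b c : A, x * (b * c) = b * (x * c) := by
    intro b c
    have h := hassoc e b c
    rw [hαe, hel, hx] at h
    exact h
  have idem : ∀ w : A, x * (x * w) = x * w := by
    intro w
    rw [← move1, hxx]
  -- (x*u)*(x*v) = x*(u*v)
  have prod : ∀ u v : A, (x * u) * (x * v) = x * (u * v) := by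
    intro u v
    rw [move1, ← move2, idem]
  -- x*(a*(b*c)) = x*((a*b)*c)
  have hassocx : ∀ a b c : A, x * (a * (b * c)) = x * ((a * b) * c) := by
    intro a b c
    have h := hassoc a b c
    rw [hx a, hx c, move1, ← move2] at h
    exact h
  -- x * (a * (e - x)) = 0
  have hxy0 : ∀ a : A, x * (a * (e - x)) = 0 := by
    intro a
    rw [mul_sub, her, mul_sub, ← hcentral a, idem, sub_self]
  refine ⟨hxx, ?_, ?_, ?_, ?_, ?_, ?_, ?_⟩
  · intro a b c
    rw [← hcentral a, ← hcentral b, ← hcentral c, prod b c, prod a (b*c), prod a b,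
        prod (a*b) c, hassocx]
  · intro a
    constructor
    · rw [← hcentral a, idem]
    · rw [← hcentral a, ← hcentral (x*a), idem]
  · intro a
    have h1 : (e - x) * (a * (e - x)) = a * (e - x) := by
      rw [sub_mul, hel, hxy0, sub_zero]
    refine ⟨h1, ?_⟩
    rw [mul_sub, her, ← hcentral (a * (e - x)), hxy0, sub_zero]
  · intro a
    rw [mul_sub, her]
    abel
  · intro a b h
    have h2 : x * (a * x) = x * (b * (e - x)) := by rw [h]
    rw [hxy0, ← hcentral a, idem] at h2
    rw [← hcentral a, h2]
  · intro a b
    constructor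
    · rw [← hcentral a, mul_sub, her, ← hcentral b, mul_sub, prod, move1, sub_self]
    · rw [mul_sub, her, sub_mul, ← hcentral a, ← hcentral b, prod, ← move2, sub_self]
  · intro a b
    rw [map_add, hx, hx, hxy0, add_zero, ← hcentral a, idem]
end

section
/- Let ({\cal A}, \mu, \alpha) be a multiplicative Hom-associative algebra and define A^\circ = { f \in A^* : f(x\alpha(y)) = f(\alpha(xy)) = f(\alpha(x)y) for all x,y }. Then the action (a \cdot f)(b) = f(b\alpha(a)) maps A \otimes A^\circ to A^\circ and satisfies the left Hom-module condition ((ab) \cdot f) = \alpha(a) \cdot (b \cdot f). -/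
/-- For a multiplicative Hom-associative algebra `A` and
`A° = {f ∈ A* : f(xα(y)) = f(α(xy)) = f(α(x)y)}`, the action `(a·f)(b) = f(bα(a))`
maps `A°` to `A°` and satisfies the left Hom-module condition `(ab)·f = α(a)·(b·f)`. -/
theorem stmt_6 {k A : Type*} [Field k] [NonUnitalNonAssocRing A] [Module k A]
    [SMulCommClass k A A] [IsScalarTower k A A]
    (α : A →ₗ[k] A)
    (hassoc : ∀ a b c : A, α a * (b * c) = (a * b) * α c)
    (hmul : ∀ a b : A, α (a * b) = α a * α b) :
    (∀ f : A →ₗ[k] k,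
      (∀ x y : A, f (x * α y) = f (α (x * y)) ∧ f (α (x * y)) = f (α x * y)) →
      ∀ a x y : A,
        f ((x * α y) * α a) = f (α (x * y) * α a) ∧
        f (α (x * y) * α a) = f ((α x * y) * α a)) ∧
    (∀ f : A →ₗ[k] k,
      (∀ x y : A, f (x * α y) = f (α (x * y)) ∧ f (α (x * y)) = f (α x * y)) →
      ∀ a b x : A, f (x * α (a * b)) = f ((x * α (α a)) * α b)) := by
  constructor
  · intro f hf a x y
    have shift : ∀ p q : A, f (α p * q) = f (p * α q) := fun p q =>
      ((hf p q).2.symm).trans (hf p q).1.symm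
    constructor
    · calc f ((x * α y) * α a)
          = f (α x * (α y * a)) := congrArg f (hassoc x (α y) a).symm
        _ = f (α (x * (α y * a))) := ((hf x (α y * a)).2).symm
        _ = f (α x * α (α y * a)) := congrArg f (hmul x (α y * a))
        _ = f (α (α x) * (α y * a)) := (shift (α x) (α y * a)).symm
        _ = f ((α x * α y) * α a) := congrArg f (hassoc (α x) (α y) a)
        _ = f (α (x * y) * α a) := congrArg f (by rw [hmul])
    · calc f (α (x * y) * α a)
          = f (α ((x * y) * a)) := congrArg f (hmul (x * y) a).symm
        _ = f ((x * y) * α a) := ((hf (x * y) a).1).symm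
        _ = f (α x * (y * a)) := congrArg f (hassoc x y a).symm
        _ = f (α (x * (y * a))) := ((hf x (y * a)).2).symm
        _ = f (α x * α (y * a)) := congrArg f (hmul x (y * a))
        _ = f (α (α x) * (y * a)) := (shift (α x) (y * a)).symm
        _ = f ((α x * y) * α a) := congrArg f (hassoc (α x) y a)
  · intro f hf a b x
    have shift : ∀ p q : A, f (α p * q) = f (p * α q) := fun p q =>
      ((hf p q).2.symm).trans (hf p q).1.symm
    calc f (x * α (a * b))
        = f (α (x * (a * b))) := (hf x (a * b)).1
      _ = f (α x * α (a * b)) := congrArg f (hmul x (a * b))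
      _ = f (α (x * α (a * b))) := ((hf x (α (a * b))).2).symm
      _ = f (α x * (α (α a) * α (α b))) := congrArg f (by rw [hmul, hmul, hmul])
      _ = f ((x * α (α a)) * α (α (α b))) := congrArg f (hassoc x (α (α a)) (α (α b)))
      _ = f (α (x * α (α a)) * α (α b)) := (shift (x * α (α a)) (α (α b))).symm
      _ = f (α ((x * α (α a)) * α b)) := congrArg f (hmul (x * α (α a)) (α b)).symm
      _ = f (α (x * α (α a)) * α b) := (hf (x * α (α a)) (α b)).2
      _ = f (α ((x * α (α a)) * b)) := congrArg f (hmul (x * α (α a)) b).symm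
      _ = f ((x * α (α a)) * α b) := ((hf (x * α (α a)) b).1).symm
end

section
/- Let ({\cal A}, \mu, \alpha) be a multiplicative Hom-associative algebra, a \cdot f defined by (a \cdot f)(b) = f(b\alpha(a)) and f \cdot a by (f \cdot a)(b) = f(\alpha(a)b) on A^\circ = { f \in A^* : f(x\alpha(y)) = f(\alpha(xy)) = f(\alpha(x)y) }. Then for all a, b in A and f in A^\circ, \alpha(a) \cdot (f \cdot b) = (a \cdot f) \cdot \alpha(b), i.e. A^\circ is an A-bimodule. -/
/-- For a multiplicative Hom-associative algebra `A`, with actions `(a·f)(b) = f(bα(a))`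
and `(f·a)(b) = f(α(a)b)` on `A°`, one has `α(a)·(f·b) = (a·f)·α(b)`, i.e. `A°` is an
`A`-bimodule. Written pointwise: `f(α(b)(xα(α(a)))) = f((α(α(b))x)α(a))`. -/
theorem stmt_7 {k A : Type*} [Field k] [NonUnitalNonAssocRing A] [Module k A]
    [SMulCommClass k A A] [IsScalarTower k A A]
    (α : A →ₗ[k] A)
    (hassoc : ∀ a b c : A, α a * (b * c) = (a * b) * α c)
    (hmul : ∀ a b : A, α (a * b) = α a * α b) :
    ∀ f : A →ₗ[k] k,
      (∀ x y : A, f (x * α y) = f (α (x * y)) ∧ f (α (x * y)) = f (α x * y)) →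
      ∀ a b x : A, f (α b * (x * α (α a))) = f ((α (α b) * x) * α a) := by
  intro f hf a b x
  have h1 : ∀ u v : A, f (u * α v) = f (α u * v) := fun u v =>
    (hf u v).1.trans (hf u v).2
  calc f (α b * (x * α (α a)))
      = f ((b * x) * α (α (α a))) := by rw [hassoc]
    _ = f (α (b * x) * α (α a)) := h1 _ _
    _ = f ((α b * α x) * α (α a)) := by rw [hmul]
    _ = f (α (α b) * (α x * α a)) := by rw [← hassoc]
    _ = f (α (α b) * α (x * a)) := by rw [← hmul]
    _ = f (α (α (α b)) * (x * a)) := h1 _ _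
    _ = f ((α (α b) * x) * α a) := by rw [hassoc]
end

section
/- Let ({\cal A}, \mu, \alpha) be a multiplicative Hom-associative algebra such that \alpha is in the centroid, i.e. \alpha(x)y = x\alpha(y) = \alpha(xy) for all x,y. Then (A^*, \alpha^*) with the coregular actions (a \cdot f)(b) = f(ba) and (f \cdot a)(b) = f(ab) is an A-bimodule: ((aa') \cdot \alpha^*(f)) = \alpha(a) \cdot (a' \cdot f), (\alpha^*(f)) \cdot (ab) = (f \cdot a) \cdot \alpha(b), and \alpha(a) \cdot (f \cdot b) = (a \cdot f) \cdot \alpha(b). -/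
/-- If `α` is in the centroid of a multiplicative Hom-associative algebra `A`, then
`(A*, α*)` with the coregular actions `(a·f)(b) = f(ba)`, `(f·a)(b) = f(ab)` is an
`A`-bimodule: the left module, right module, and bimodule conditions hold. -/
theorem stmt_8 {k A : Type*} [Field k] [NonUnitalNonAssocRing A] [Module k A]
    [SMulCommClass k A A] [IsScalarTower k A A]
    (α : A →ₗ[k] A)
    (hassoc : ∀ a b c : A, α a * (b * c) = (a * b) * α c)
    (hmul : ∀ a b : A, α (a * b) = α a * α b)
    (hcent : ∀ x y : A, α x * y = x * α y ∧ x * α y = α (x * y)) :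
    (∀ f : A →ₗ[k] k, ∀ a a' b : A, f (α (b * (a * a'))) = f ((b * α a) * a')) ∧
    (∀ f : A →ₗ[k] k, ∀ a b x : A, f (α ((a * b) * x)) = f (a * (α b * x))) ∧
    (∀ f : A →ₗ[k] k, ∀ a b c : A, f (b * (c * α a)) = f ((α b * c) * a)) := by
  have h1 : ∀ x y : A, α x * y = x * α y := fun x y => (hcent x y).1
  have h2 : ∀ x y : A, x * α y = α (x * y) := fun x y => (hcent x y).2
  refine ⟨fun f a a' b => ?_, fun f a b x => ?_, fun f a b c => ?_⟩
  · congr 1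
    calc α (b * (a * a')) = α b * (a * a') := ((h1 b _).trans (h2 b _)).symm
      _ = (b * a) * α a' := hassoc b a a'
      _ = α (b * a) * a' := (h1 _ _).symm
      _ = (b * α a) * a' := by rw [← h2]
  · congr 1
    calc α ((a * b) * x) = α a * (b * x) := by rw [← h2, ← hassoc]
      _ = a * α (b * x) := h1 a _
      _ = a * (α b * x) := by rw [(h1 b x).trans (h2 b x)]
  · congr 1
    calc b * (c * α a) = b * α (c * a) := by rw [h2]
      _ = α b * (c * a) := (h1 b _).symm
      _ = (b * c) * α a := hassoc b c a
      _ = α (b * c) * a := by rw [h1, h2]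
      _ = (α b * c) * a := by rw [← h2, ← h1]
end

section
/- If ({\cal A}, \mu, \alpha) is a Hom-associative algebra in which \alpha is an element of the centroid (\alpha(x)y = x\alpha(y) = \alpha(xy)), then A embeds into the unital Hom-associative algebra B = k[\alpha] \oplus A with multiplication (p(\alpha)+a)(q(\alpha)+b) = p(\alpha)q(\alpha) + q(\alpha)(a) + p(\alpha)(b) + ab and twisting map \beta given by \alpha on A and by multiplication by the variable \alpha on k[\alpha]; i.e., B satisfies \beta(u)(vw) = (uv)\beta(w) for all u,v,w in B, B is unital, and A is a Hom-subalgebra. -/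
/-- If `α` is in the centroid of a Hom-associative algebra `A`, then `A` embeds into the
unital Hom-associative algebra `B = k[α] ⊕ A` with the multiplication
`(p(α)+a)(q(α)+b) = p(α)q(α) + q(α)(a) + p(α)(b) + ab` and twisting map `β` given by `α`
on `A` and multiplication by the variable on `k[α]`. -/
theorem stmt_9 {k A : Type*} [Field k] [NonUnitalNonAssocRing A] [Module k A]
    [SMulCommClass k A A] [IsScalarTower k A A]
    (α : A →ₗ[k] A)
    (hassoc : ∀ a b c : A, α a * (b * c) = (a * b) * α c)
    (hcent : ∀ x y : A, α x * y = x * α y ∧ x * α y = α (x * y))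
    (mulB : Polynomial k × A → Polynomial k × A → Polynomial k × A)
    (hmulB : ∀ (p q : Polynomial k) (a b : A),
      mulB (p, a) (q, b) =
        (p * q, (Polynomial.aeval (α : Module.End k A) q) a
          + (Polynomial.aeval (α : Module.End k A) p) b + a * b))
    (β : Polynomial k × A → Polynomial k × A)
    (hβ : ∀ (p : Polynomial k) (a : A), β (p, a) = (Polynomial.X * p, α a)) :
    (∀ u v w : Polynomial k × A, mulB (β u) (mulB v w) = mulB (mulB u v) (β w)) ∧
    (∀ u : Polynomial k × A, mulB (1, 0) u = u ∧ mulB u (1, 0) = u) ∧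
    Function.Injective (fun a : A => ((0 : Polynomial k), a)) ∧
    (∀ a b : A, mulB (0, a) (0, b) = (0, a * b)) ∧
    (∀ a : A, β (0, a) = (0, α a)) := by
  have hc1 : ∀ x y : A, α x * y = x * α y := fun x y => (hcent x y).1
  have hc2 : ∀ x y : A, x * α y = α (x * y) := fun x y => (hcent x y).2
  have hc3 : ∀ x y : A, α x * y = α (x * y) := fun x y => by rw [hc1, hc2]
  set E : Module.End k A := α with hE
  -- every polynomial in α is in the centroid
  have key : ∀ p : Polynomial k,
      (∀ x y : A, (Polynomial.aeval E p) x * y = (Polynomial.aeval E p) (x * y)) ∧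
      (∀ x y : A, x * (Polynomial.aeval E p) y = (Polynomial.aeval E p) (x * y)) := by
    intro p
    induction p using Polynomial.induction_on with
    | C s =>
        constructor <;> intro x y <;>
          simp [Polynomial.aeval_C, Module.algebraMap_end_apply, smul_mul_assoc, mul_smul_comm]
    | add p q hp hq =>
        constructor <;> intro x y <;>
          simp only [map_add, LinearMap.add_apply, add_mul, mul_add, hp.1, hp.2, hq.1, hq.2]
    | monomial n s h =>
        have e : (Polynomial.aeval E (Polynomial.C s * Polynomial.X ^ (n + 1)))
            = (Polynomial.aeval E (Polynomial.C s * Polynomial.X ^ n)) * E := by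
          rw [show Polynomial.C s * Polynomial.X ^ (n + 1)
                = Polynomial.C s * Polynomial.X ^ n * Polynomial.X by ring,
            map_mul, Polynomial.aeval_X]
        have eX : ∀ x : A, ((Polynomial.aeval E (Polynomial.C s * Polynomial.X ^ n)) * E) x
            = (Polynomial.aeval E (Polynomial.C s * Polynomial.X ^ n)) (α x) := fun x => rfl
        constructor <;> intro x y <;> rw [e, eX]
        · rw [h.1, hc1, hc2]; exact (eX (x * y)).symm
        · rw [h.2, hc2]; exact (eX (x * y)).symm
  -- polynomials in α commute with each other
  have comm : ∀ (p q : Polynomial k) (x : A),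
      (Polynomial.aeval E p) ((Polynomial.aeval E q) x)
        = (Polynomial.aeval E q) ((Polynomial.aeval E p) x) := by
    intro p q x
    have h : (Polynomial.aeval E p) * (Polynomial.aeval E q)
        = (Polynomial.aeval E q) * (Polynomial.aeval E p) := by
      rw [← map_mul, ← map_mul, mul_comm]
    have := congrArg (fun f : Module.End k A => f x) h
    simpa [Module.End.mul_apply] using this
  have hXa : ∀ x : A, (Polynomial.aeval E (Polynomial.X : Polynomial k)) x = α x := by
    intro x; rw [Polynomial.aeval_X]
  have comm' : ∀ (p : Polynomial k) (x : A),
      α ((Polynomial.aeval E p) x) = (Polynomial.aeval E p) (α x) := by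
    intro p x
    rw [← hXa, ← hXa, comm]
  refine ⟨?_, ?_, ?_, ?_, ?_⟩
  · rintro ⟨p, a⟩ ⟨q, b⟩ ⟨r, c⟩
    rw [hβ, hβ, hmulB, hmulB, hmulB, hmulB]
    refine Prod.ext ?_ ?_
    · show Polynomial.X * p * (q * r) = p * q * (Polynomial.X * r)
      ring
    · show (Polynomial.aeval E (q * r)) (α a)
          + (Polynomial.aeval E (Polynomial.X * p))
              ((Polynomial.aeval E r) b + (Polynomial.aeval E q) c + b * c)
          + α a * ((Polynomial.aeval E r) b + (Polynomial.aeval E q) c + b * c)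
        = (Polynomial.aeval E (Polynomial.X * r))
              ((Polynomial.aeval E q) a + (Polynomial.aeval E p) b + a * b)
          + (Polynomial.aeval E (p * q)) (α c)
          + ((Polynomial.aeval E q) a + (Polynomial.aeval E p) b + a * b) * α c
      simp only [map_mul, Module.End.mul_apply, map_add, mul_add, add_mul, hXa]
      have t1 : (Polynomial.aeval E q) ((Polynomial.aeval E r) (α a))
          = α ((Polynomial.aeval E r) ((Polynomial.aeval E q) a)) := by
        rw [comm' r, comm' q, comm q r]
      have t2 : α ((Polynomial.aeval E p) ((Polynomial.aeval E r) b))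
          = α ((Polynomial.aeval E r) ((Polynomial.aeval E p) b)) :=
        congrArg α (comm p r b)
      have t3 : α ((Polynomial.aeval E p) ((Polynomial.aeval E q) c))
          = (Polynomial.aeval E p) ((Polynomial.aeval E q) (α c)) := by
        rw [comm' p, comm' q]
      have t4 : α a * (Polynomial.aeval E r) b
          = α ((Polynomial.aeval E r) (a * b)) := by
        rw [(key r).2, hc3, ← comm' r]
      have t5 : α a * (Polynomial.aeval E q) c
          = (Polynomial.aeval E q) a * α c := by
        rw [(key q).2, (key q).1, hc1]
      have t6 : α ((Polynomial.aeval E p) (b * c))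
          = (Polynomial.aeval E p) b * α c := by
        rw [(key p).1, comm' p, hc2]
      have t7 : α a * (b * c) = (a * b) * α c := hassoc a b c
      rw [t1, t2, t3, t4, t5, t6, t7]
      abel
  · rintro ⟨p, a⟩
    constructor <;> rw [hmulB] <;> simp
  · intro a b h
    simpa using h
  · intro a b
    rw [hmulB]; simp
  · intro a
    rw [hβ]; simp
end

section
/- If a Hom-associative algebra A embeds into a unital Hom-associative algebra (B, \beta) with \beta|_A = \alpha, then \alpha is in the centroid of A, i.e. \alpha(x)y = x\alpha(y) = \alpha(xy) for all x,y in A. -/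
/-- If a Hom-associative algebra `A` embeds into a unital Hom-associative algebra `(B, β)`
with `β|_A = α`, then `α` is in the centroid of `A`: `α(x)y = xα(y) = α(xy)`. -/
theorem stmt_10 {k A B : Type*} [Field k]
    [NonUnitalNonAssocRing A] [Module k A] [SMulCommClass k A A] [IsScalarTower k A A]
    [NonUnitalNonAssocRing B] [Module k B] [SMulCommClass k B B] [IsScalarTower k B B]
    (α : A →ₗ[k] A) (β : B →ₗ[k] B)
    (hA : ∀ a b c : A, α a * (b * c) = (a * b) * α c)
    (hB : ∀ u v w : B, β u * (v * w) = (u * v) * β w)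
    (e : B) (hel : ∀ u : B, e * u = u) (her : ∀ u : B, u * e = u)
    (ι : A →ₗ[k] B) (hinj : Function.Injective ι)
    (hιmul : ∀ a b : A, ι (a * b) = ι a * ι b)
    (hιβ : ∀ a : A, β (ι a) = ι (α a)) :
    ∀ x y : A, α x * y = x * α y ∧ x * α y = α (x * y) := by
  -- In B: β(u) * v = u * β(v)
  have h1 : ∀ u v : B, β u * v = u * β v := by
    intro u v
    calc β u * v = β u * (e * v) := by rw [hel]
    _ = (u * e) * β v := hB u e v
    _ = u * β v := by rw [her]
  -- In B: β e * w = β w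
  have h2 : ∀ w : B, β e * w = β w := by
    intro w
    have := hB e e w
    rwa [hel, hel, hel] at this
  -- In B: u * β v = β (u * v)
  have h3 : ∀ u v : B, u * β v = β (u * v) := by
    intro u v
    have := hB e u v
    rw [hel, h2] at this
    exact this.symm
  intro x y
  constructor
  · apply hinj
    rw [hιmul, hιmul, ← hιβ, ← hιβ, h1]
  · apply hinj
    rw [hιmul, ← hιβ, ← hιβ, h3, hιmul]
end

section
/- Let (A, \mu, \alpha) be a multiplicative Hom-associative algebra, (V, \beta) an A-bimodule with \beta(v\cdot a)=\beta(v)\cdot\alpha(a) and \beta(a\cdot v)=\alpha(a)\cdot\beta(v), and b = \sum_{i=0}^n (-1)^i \delta_i : V \otimes A^{\otimes n} \to V \otimes A^{\otimes n-1} the alternating sum of the Hom-Hochschild face maps. Then b \circ b = 0. -/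
/-!
The face maps satisfy the semi-simplicial identities `δᵢ ∘ δⱼ = δⱼ ∘ δᵢ₊₁` for `j ≤ i`: on the
tensor factors in `A` this is Hom-associativity together with multiplicativity of `α`, on the
factor in `V` it is one of the five bimodule axioms in each case. As for any semi-simplicial
object, the terms of `b ∘ b` then cancel in pairs, the term indexed by `(j, i)` with `j ≤ i`
against the one indexed by `(i + 1, j)`.
-/

/-- The `i`-th Hochschild face map of the Hom-Hochschild complex `C_n(A,V) = V ⊗ A^{⊗n}`,
acting on elementary tensors (represented as pairs of a vector and a tuple). -/
def homFace {A V : Type*} [Mul A] (α : A → A) (β : V → V)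
    (l : A → V → V) (r : V → A → V) (n : ℕ) (i : Fin (n + 2))
    (x : V × (Fin (n + 1) → A)) : V × (Fin n → A) :=
  if (i : ℕ) = 0 then (r x.1 (x.2 0), fun j => α (x.2 j.succ))
  else if (i : ℕ) = n + 1 then (l (x.2 (Fin.last n)) x.1, fun j => α (x.2 j.castSucc))
  else (β x.1, fun j =>
    if (j : ℕ) + 1 < (i : ℕ) then α (x.2 j.castSucc)
    else if (j : ℕ) + 1 = (i : ℕ) then x.2 j.castSucc * x.2 j.succ
    else α (x.2 j.succ))

theorem Fin.sum_neg_one_pow_smul_sum_eq_zero {R M : Type*} [Ring R] [AddCommGroup M]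
    [Module R M] {n : ℕ} (c : Fin (n + 3) → Fin (n + 2) → M)
    (hc : ∀ (j : Fin (n + 3)) (i : Fin (n + 2)) (hji : (j : ℕ) ≤ i),
      c j i = c i.succ (j.castLT (by omega))) :
    ∑ j : Fin (n + 3), (-1 : R) ^ (j : ℕ) • ∑ i : Fin (n + 2), (-1 : R) ^ (i : ℕ) • c j i = 0 := by
  simp only [Finset.smul_sum, smul_smul, ← pow_add, ← Finset.sum_product']
  let σ : Fin (n + 3) × Fin (n + 2) → Fin (n + 3) × Fin (n + 2) := fun p =>
    if h : (p.1 : ℕ) ≤ p.2 then (p.2.succ, p.1.castLT (by omega))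
    else (p.2.castSucc, p.1.pred (by rintro h0; simp [h0] at h))
  have σ_of_le (j : Fin (n + 3)) (i : Fin (n + 2)) (h : (j : ℕ) ≤ i) :
      σ (j, i) = (i.succ, j.castLT (by omega)) := dif_pos h
  have σ_succ_of_le (j i : Fin (n + 2)) (h : (i : ℕ) ≤ j) : σ (j.succ, i) = (i.castSucc, j) := by
    simp only [σ, dif_neg (show ¬ ((j.succ : Fin (n + 3)) : ℕ) ≤ i by rw [Fin.val_succ]; omega), Fin.pred_succ]
  have sign_flip (a b : ℕ) (x : M) (hab : b = a + 1) : (-1 : R) ^ a • x + (-1 : R) ^ b • x = 0 := by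
    rw [hab, pow_succ, mul_neg_one, neg_smul, add_neg_cancel]
  have pair_cases (P : Fin (n + 3) × Fin (n + 2) → Prop)
      (le : ∀ (j : Fin (n + 3)) (i : Fin (n + 2)), (j : ℕ) ≤ i → P (j, i))
      (succ_ge : ∀ j i : Fin (n + 2), (i : ℕ) ≤ j → P (j.succ, i)) (p) : P p := by
    obtain ⟨j, i⟩ := p
    by_cases h : (j : ℕ) ≤ i
    · exact le j i h
    obtain ⟨j, rfl⟩ := Fin.exists_succ_eq.2 (show j ≠ 0 by rintro rfl; simp at h)
    exact succ_ge j i (by rw [Fin.val_succ] at h; omega)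
  refine Finset.sum_ninvolution σ (pair_cases _ (fun j i h => ?_) (fun j i h => ?_))
    (fun p _ => pair_cases (fun p => σ p ≠ p) (fun j i h => ?_) (fun j i h => ?_) p)
    (fun _ => Finset.mem_univ _) (pair_cases _ (fun j i h => ?_) (fun j i h => ?_))
  · rw [σ_of_le j i h, ← hc j i h]
    exact sign_flip _ _ _ (by simp only [Fin.val_succ, Fin.val_castLT]; omega)
  · rw [σ_succ_of_le j i h, hc i.castSucc j h, add_comm]
    exact sign_flip _ _ _ (by simp only [Fin.val_succ, Fin.val_castSucc]; omega)
  · rw [σ_of_le j i h]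
    simp only [ne_eq, Prod.ext_iff, Fin.ext_iff, Fin.val_succ, Fin.val_castLT]
    omega
  · rw [σ_succ_of_le j i h]
    simp only [ne_eq, Prod.ext_iff, Fin.ext_iff, Fin.val_succ, Fin.val_castSucc]
    omega
  · rw [σ_of_le j i h, σ_succ_of_le _ _ (by simpa using h)]
    simp
  · rw [σ_succ_of_le j i h, σ_of_le _ _ (by simpa using h)]
    simp

def tupleFace {A : Type*} [Mul A] (α : A → A) (n : ℕ) (i : Fin (n + 2)) (a : Fin (n + 1) → A) :
    Fin n → A := fun j =>
  if (j : ℕ) + 1 < i then α (a j.castSucc)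
  else if (j : ℕ) + 1 = i then a j.castSucc * a j.succ
  else α (a j.succ)

theorem tupleFace_comp_of_le {A : Type*} [Mul A] {α : A → A}
    (hassoc : ∀ a b c : A, α a * (b * c) = (a * b) * α c)
    (hmul : ∀ a b : A, α (a * b) = α a * α b)
    {n : ℕ} (i : Fin (n + 2)) (j : Fin (n + 3)) (hji : (j : ℕ) ≤ i) (a : Fin (n + 2) → A) :
    tupleFace α n i (tupleFace α (n + 1) j a) =
      tupleFace α n (j.castLT (by omega)) (tupleFace α (n + 1) i.succ a) := by
  funext t
  simp only [tupleFace, Fin.val_succ, Fin.val_castSucc, Fin.val_castLT, Fin.succ_castSucc]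
  split_ifs <;> first | omega | rfl | simp only [hassoc, hmul]

section HomHochschild

variable {A V : Type*} [Mul A] {α : A → A} {β : V → V} {l : A → V → V} {r : V → A → V}

theorem homFace_snd (n : ℕ) (i : Fin (n + 2)) (x : V × (Fin (n + 1) → A)) :
    (homFace α β l r n i x).2 = tupleFace α n i x.2 := by
  funext t
  by_cases h0 : (i : ℕ) = 0
  · simp [homFace, tupleFace, h0]
  by_cases hl : (i : ℕ) = n + 1
  · simp [homFace, tupleFace, hl, t.isLt]
  · simp [homFace, tupleFace, h0, hl]

theorem homFace_fst_comp_of_le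
    (hlmod : ∀ (a b : A) (v : V), l (a * b) (β v) = l (α a) (l b v))
    (hrmod : ∀ (a b : A) (v : V), r (β v) (a * b) = r (r v a) (α b))
    (hbi : ∀ (a b : A) (v : V), l (α a) (r v b) = r (l a v) (α b))
    (hβr : ∀ (a : A) (v : V), β (r v a) = r (β v) (α a))
    (hβl : ∀ (a : A) (v : V), β (l a v) = l (α a) (β v))
    {n : ℕ} (i : Fin (n + 2)) (j : Fin (n + 3)) (hji : (j : ℕ) ≤ i) (x : V × (Fin (n + 2) → A)) :
    (homFace α β l r n i (homFace α β l r (n + 1) j x)).1 =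
      (homFace α β l r n (j.castLT (by omega)) (homFace α β l r (n + 1) i.succ x)).1 := by
  obtain ⟨i, hi⟩ := i
  obtain ⟨j, hj⟩ := j
  simp only at hji
  rcases Nat.eq_zero_or_pos j with rfl | hj0
  · rcases Nat.eq_zero_or_pos i with rfl | hi0
    · simp [homFace, hrmod]
    rcases (show i < n + 1 ∨ i = n + 1 by omega) with hin | rfl
    · simp [homFace, hi0, hi0.ne', hin.ne, hβr]
    · simp [homFace, hbi]
  · rcases (show i < n + 1 ∨ i = n + 1 by omega) with hin | rfl
    · simp [homFace, hj0.ne', hin.ne, (hji.trans_lt hin).ne, (hj0.trans_le hji).ne',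
        (show j ≠ n + 2 by omega)]
    rcases (show j < n + 1 ∨ j = n + 1 by omega) with hjn | rfl
    · simp [homFace, hj0.ne', hjn.ne, hjn.ne', hjn.not_gt, (show j ≠ n + 2 by omega), hβl]
    · simp [homFace, hlmod]

theorem homFace_comp_of_le
    (hassoc : ∀ a b c : A, α a * (b * c) = (a * b) * α c)
    (hmul : ∀ a b : A, α (a * b) = α a * α b)
    (hlmod : ∀ (a b : A) (v : V), l (a * b) (β v) = l (α a) (l b v))
    (hrmod : ∀ (a b : A) (v : V), r (β v) (a * b) = r (r v a) (α b))
    (hbi : ∀ (a b : A) (v : V), l (α a) (r v b) = r (l a v) (α b))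
    (hβr : ∀ (a : A) (v : V), β (r v a) = r (β v) (α a))
    (hβl : ∀ (a : A) (v : V), β (l a v) = l (α a) (β v))
    {n : ℕ} (i : Fin (n + 2)) (j : Fin (n + 3)) (hji : (j : ℕ) ≤ i) (x : V × (Fin (n + 2) → A)) :
    homFace α β l r n i (homFace α β l r (n + 1) j x) =
      homFace α β l r n (j.castLT (by omega)) (homFace α β l r (n + 1) i.succ x) := by
  refine Prod.ext (homFace_fst_comp_of_le hlmod hrmod hbi hβr hβl i j hji x) ?_
  simp only [homFace_snd]
  exact tupleFace_comp_of_le hassoc hmul i j hji x.2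

end HomHochschild

theorem stmt_13_general {k A V : Type*} [Field k] [NonUnitalNonAssocRing A] [Module k A]
    [AddCommGroup V] [Module k V]
    (α : A →ₗ[k] A)
    (hassoc : ∀ a b c : A, α a * (b * c) = (a * b) * α c)
    (hmul : ∀ a b : A, α (a * b) = α a * α b)
    (β : V →ₗ[k] V) (l : A →ₗ[k] V →ₗ[k] V) (r : V →ₗ[k] A →ₗ[k] V)
    (hlmod : ∀ (a b : A) (v : V), l (a * b) (β v) = l (α a) (l b v))
    (hrmod : ∀ (a b : A) (v : V), r (β v) (a * b) = r (r v a) (α b))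
    (hbi : ∀ (a b : A) (v : V), l (α a) (r v b) = r (l a v) (α b))
    (hβr : ∀ (a : A) (v : V), β (r v a) = r (β v) (α a))
    (hβl : ∀ (a : A) (v : V), β (l a v) = l (α a) (β v))
    (n : ℕ) :
    ∀ x : V × (Fin (n + 2) → A),
      (Finsupp.lift ((V × (Fin n → A)) →₀ k) k (V × (Fin (n + 1) → A)))
        (fun y => ∑ i : Fin (n + 2), ((-1 : k) ^ (i : ℕ)) •
          Finsupp.single
            (homFace (⇑α) (⇑β) (fun a v => l a v) (fun v a => r v a) n i y) (1 : k))
        (∑ i : Fin (n + 3), ((-1 : k) ^ (i : ℕ)) •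
          Finsupp.single
            (homFace (⇑α) (⇑β) (fun a v => l a v) (fun v a => r v a) (n + 1) i x)
            (1 : k)) = 0 := by
  intro x
  simp only [map_sum, map_smul, Finsupp.lift_apply, zero_smul, Finsupp.sum_single_index,
    one_smul]
  exact Fin.sum_neg_one_pow_smul_sum_eq_zero _ fun j i hji => by
    rw [homFace_comp_of_le hassoc hmul hlmod hrmod hbi hβr hβl i j hji x]

/-- For a multiplicative Hom-associative algebra `A` and an `A`-bimodule `(V, β)` with
`β(v·a) = β(v)·α(a)` and `β(a·v) = α(a)·β(v)`, the Hom-Hochschild boundary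
`b = Σ (-1)^i δ_i` satisfies `b ∘ b = 0` (stated on the free module spanned by
elementary tensors, `b` being extended linearly via `Finsupp.lift`). -/
theorem stmt_13 {k A V : Type*} [Field k] [NonUnitalNonAssocRing A] [Module k A]
    [SMulCommClass k A A] [IsScalarTower k A A]
    [AddCommGroup V] [Module k V]
    (α : A →ₗ[k] A)
    (hassoc : ∀ a b c : A, α a * (b * c) = (a * b) * α c)
    (hmul : ∀ a b : A, α (a * b) = α a * α b)
    (β : V →ₗ[k] V) (l : A →ₗ[k] V →ₗ[k] V) (r : V →ₗ[k] A →ₗ[k] V)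
    (hlmod : ∀ (a b : A) (v : V), l (a * b) (β v) = l (α a) (l b v))
    (hrmod : ∀ (a b : A) (v : V), r (β v) (a * b) = r (r v a) (α b))
    (hbi : ∀ (a b : A) (v : V), l (α a) (r v b) = r (l a v) (α b))
    (hβr : ∀ (a : A) (v : V), β (r v a) = r (β v) (α a))
    (hβl : ∀ (a : A) (v : V), β (l a v) = l (α a) (β v))
    (n : ℕ) :
    ∀ x : V × (Fin (n + 2) → A),
      (Finsupp.lift ((V × (Fin n → A)) →₀ k) k (V × (Fin (n + 1) → A)))
        (fun y => ∑ i : Fin (n + 2), ((-1 : k) ^ (i : ℕ)) •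
          Finsupp.single
            (homFace (⇑α) (⇑β) (fun a v => l a v) (fun v a => r v a) n i y) (1 : k))
        (∑ i : Fin (n + 3), ((-1 : k) ^ (i : ℕ)) •
          Finsupp.single
            (homFace (⇑α) (⇑β) (fun a v => l a v) (fun v a => r v a) (n + 1) i x)
            (1 : k)) = 0 :=
  stmt_13_general α hassoc hmul β l r hlmod hrmod hbi hβr hβl n
end

section
/- Let (A, \alpha) be a multiplicative Hom-associative algebra and identify cochains \varphi : A^{\otimes n} \to A^* with maps \phi : A^{\otimes n+1} \to k via \phi(a_0 \otimes ... \otimes a_n) = \varphi(a_1 \otimes ... \otimes a_n)(a_0). Define t_n\phi(a_0 \otimes ... \otimes a_n) = (-1)^n \phi(a_n \otimes a_0 \otimes ... \otimes a_{n-1}) and the Hochschild coboundary b\phi(a_0 \otimes ... \otimes a_{n+1}) = \phi(a_0 a_1 \otimes \alpha(a_2) \otimes ... \otimes \alpha(a_{n+1})) + \sum_{j=1}^n (-1)^j \phi(\alpha(a_0) \otimes ... \otimes a_j a_{j+1} \otimes ... \otimes \alpha(a_{n+1})) + (-1)^{n+1} \phi(a_{n+1} a_0 \otimes \alpha(a_1)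 \otimes ... \otimes \alpha(a_n)). Then if \phi satisfies t_n\phi = \phi, then t_{n+1}(b\phi) = b\phi, i.e. the cyclic cochains form a subcomplex. -/
/-- The `i`-th Hochschild coface data: the map `A^{⊗(n+2)} → A^{⊗(n+1)}` on elementary
tensors, twisted by `γ` and with product `m`; the coface `δ_i φ = φ ∘ cFace γ m n i`. -/
def cFace {A : Type*} (γ : A → A) (m : A → A → A) (n : ℕ) (i : Fin (n + 2))
    (a : Fin (n + 2) → A) : Fin (n + 1) → A :=
  if (i : ℕ) = n + 1 then
    fun j => if (j : ℕ) = 0 then m (a (Fin.last (n + 1))) (a 0) else γ (a j.castSucc)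
  else fun j =>
    if (j : ℕ) < (i : ℕ) then γ (a j.castSucc)
    else if (j : ℕ) = (i : ℕ) then m (a j.castSucc) (a j.succ)
    else γ (a j.succ)

/-!
Write `τ a = fun j => a (j - 1)` for the cyclic rotation of arguments. The cofaces intertwine
with it, `δ₀ ∘ τ = δ_{n+1}` and `δ_{i+1} ∘ τ = τ ∘ δ_i`, so in `t_{n+1}(bφ)` the `i = 0` term
becomes the last term of `bφ`, while each remaining term is `t_n φ ∘ δ_i`, which cyclicity
of `φ` turns back into `φ ∘ δ_i` with exactly the sign `(-1)^i` it carries in `bφ`.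
-/

lemma Fin.val_sub_one_eq_ite {N : ℕ} (x : Fin (N + 1)) :
    ((x - 1 : Fin (N + 1)) : ℕ) = if (x : ℕ) = 0 then N else (x : ℕ) - 1 := by
  simp only [Fin.coe_sub_one, ← Fin.val_eq_zero_iff]

section
variable {A : Type*} (γ : A → A) (m : A → A → A) (n : ℕ)

lemma cFace_zero_rotate (a : Fin (n + 2) → A) :
    cFace γ m n 0 (fun j => a (j - 1)) = cFace γ m n (Fin.last (n + 1)) a := by
  rw [cFace, if_neg (by simp), cFace, if_pos (Fin.val_last _)]
  funext j
  by_cases hj : (j : ℕ) = 0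
  · simp only [hj, Fin.val_zero, lt_self_iff_false, if_true, if_false]
    refine congrArg₂ m (congrArg a (Fin.ext ?_)) (congrArg a (Fin.ext ?_)) <;>
      simp [Fin.val_sub_one_eq_ite, hj]
  · simp only [hj, Fin.val_zero, Nat.not_lt_zero, if_false]
    refine congrArg γ (congrArg a (Fin.ext ?_))
    simp [Fin.val_sub_one_eq_ite, hj]

lemma cFace_succ_rotate (a : Fin (n + 2) → A) (i : Fin (n + 1)) :
    cFace γ m n i.succ (fun j => a (j - 1)) = fun j => cFace γ m n i.castSucc a (j - 1) := by
  have hi := i.isLt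
  funext j
  simp only [cFace, ite_apply, Fin.val_sub_one_eq_ite, Fin.val_succ, Fin.val_castSucc]
  -- each case either has contradictory index constraints or compares the same two slots of `a`
  split_ifs <;> first
    | (exfalso; omega)
    | refine congrArg γ (congrArg a (Fin.ext ?_))
    | refine congrArg₂ m (congrArg a (Fin.ext ?_)) (congrArg a (Fin.ext ?_))
  all_goals
    simp only [Fin.val_sub_one_eq_ite, Fin.val_castSucc, Fin.val_succ, Fin.val_last, Fin.val_zero]
    split_ifs <;> first | omega | contradiction

variable {R : Type*} [CommRing R]

def IsCyclicCochain {n : ℕ} (φ : (Fin (n + 1) → A) → R) : Prop :=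
  ∀ a, (-1) ^ n * φ (fun j => a (j - 1)) = φ a

def hochschildCoboundary (φ : (Fin (n + 1) → A) → R) (a : Fin (n + 2) → A) : R :=
  ∑ i : Fin (n + 2), (-1) ^ (i : ℕ) * φ (cFace γ m n i a)

variable {γ m n}

theorem IsCyclicCochain.hochschildCoboundary {φ : (Fin (n + 1) → A) → R}
    (hφ : IsCyclicCochain φ) : IsCyclicCochain (hochschildCoboundary γ m n φ) := by
  intro a
  unfold _root_.hochschildCoboundary
  rw [Fin.sum_univ_succ, mul_add, add_comm]
  conv_rhs => rw [Fin.sum_univ_castSucc]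
  congr 1
  · rw [Finset.mul_sum]
    refine Finset.sum_congr rfl fun i _ => ?_
    rw [cFace_succ_rotate, ← hφ (cFace γ m n i.castSucc a), Fin.val_succ, Fin.val_castSucc]
    ring
  · rw [cFace_zero_rotate, Fin.val_zero, Fin.val_last, pow_zero, one_mul]
end

theorem stmt_17_general {k A : Type*} [Field k] [NonUnitalNonAssocRing A] [Module k A]
    (α : A →ₗ[k] A)
    (n : ℕ) (φ : MultilinearMap k (fun _ : Fin (n + 1) => A) k)
    (hcyc : ∀ a : Fin (n + 1) → A, ((-1 : k) ^ n) * φ (fun j => a (j - 1)) = φ a) :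
    ∀ a : Fin (n + 2) → A,
      ((-1 : k) ^ (n + 1)) *
        (∑ i : Fin (n + 2), ((-1 : k) ^ (i : ℕ)) *
          φ (cFace (⇑α) (· * ·) n i (fun j => a (j - 1)))) =
      ∑ i : Fin (n + 2), ((-1 : k) ^ (i : ℕ)) * φ (cFace (⇑α) (· * ·) n i a) :=
  IsCyclicCochain.hochschildCoboundary (γ := ⇑α) (m := (· * ·)) hcyc

/-- For a multiplicative Hom-associative algebra `A`, if a cochain
`φ : A^{⊗(n+1)} → k` is cyclic (`t_n φ = φ`), then its Hochschild coboundary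
`b φ = Σ_{i=0}^{n+1} (-1)^i φ ∘ δ_i` is also cyclic (`t_{n+1}(bφ) = bφ`):
the cyclic cochains form a subcomplex. -/
theorem stmt_17 {k A : Type*} [Field k] [NonUnitalNonAssocRing A] [Module k A]
    [SMulCommClass k A A] [IsScalarTower k A A]
    (α : A →ₗ[k] A)
    (hassoc : ∀ a b c : A, α a * (b * c) = (a * b) * α c)
    (hmul : ∀ a b : A, α (a * b) = α a * α b)
    (n : ℕ) (φ : MultilinearMap k (fun _ : Fin (n + 1) => A) k)
    (hcyc : ∀ a : Fin (n + 1) → A, ((-1 : k) ^ n) * φ (fun j => a (j - 1)) = φ a) :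
    ∀ a : Fin (n + 2) → A,
      ((-1 : k) ^ (n + 1)) *
        (∑ i : Fin (n + 2), ((-1 : k) ^ (i : ℕ)) *
          φ (cFace (⇑α) (· * ·) n i (fun j => a (j - 1)))) =
      ∑ i : Fin (n + 2), ((-1 : k) ^ (i : ℕ)) * φ (cFace (⇑α) (· * ·) n i a) :=
  stmt_17_general α n φ hcyc
end

section
/- Let (A, \mu, \alpha) be a multiplicative Hom-associative algebra, \rho : A \to A a derivation (\rho(ab) = \rho(a)b + a\rho(b)) with \alpha\rho = \rho\alpha = \rho, and tr : A \to k a trace (tr(ab) = tr(ba)) with tr \circ \rho = 0. Then \varphi(a,b) := tr(a\rho(b)) is a cyclic 1-cocycle: \varphi(ab, \alpha(c)) - \varphi(\alpha(a), bc) + \varphi(ca, \alpha(b)) = 0 and \varphi(a,b) = -\varphi(b,a). -/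
/-- For a multiplicative Hom-associative algebra `A`, a derivation `ρ` with
`αρ = ρα = ρ` and a trace `tr` with `tr ∘ ρ = 0`, the functional
`φ(a,b) = tr(aρ(b))` is a cyclic 1-cocycle. -/
theorem stmt_18 {k A : Type*} [Field k] [NonUnitalNonAssocRing A] [Module k A]
    [SMulCommClass k A A] [IsScalarTower k A A]
    (α : A →ₗ[k] A)
    (hassoc : ∀ a b c : A, α a * (b * c) = (a * b) * α c)
    (hmul : ∀ a b : A, α (a * b) = α a * α b)
    (ρ : A →ₗ[k] A) (hρ : ∀ a b : A, ρ (a * b) = ρ a * b + a * ρ b)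
    (hαρ : ∀ a : A, α (ρ a) = ρ a) (hρα : ∀ a : A, ρ (α a) = ρ a)
    (tr : A →ₗ[k] k) (htr : ∀ a b : A, tr (a * b) = tr (b * a))
    (htrρ : ∀ a : A, tr (ρ a) = 0) :
    (∀ a b c : A,
      tr ((a * b) * ρ (α c)) - tr (α a * ρ (b * c)) + tr ((c * a) * ρ (α b)) = 0) ∧
    (∀ a b : A, tr (a * ρ b) = - tr (b * ρ a)) := by
  constructor
  · intro a b c
    have h1 : α a * (b * ρ c) = (a * b) * ρ c := by
      rw [hassoc, hαρ]
    have h2 : tr (α a * (ρ b * c)) = tr ((c * a) * ρ b) := by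
      have : α (ρ b) * (c * a) = (ρ b * c) * α a := hassoc (ρ b) c a
      rw [hαρ] at this
      rw [htr (α a), ← this, htr]
    rw [hρα c, hρα b, hρ b c, mul_add, map_add, h1, h2]
    ring
  · intro a b
    have := htrρ (a * b)
    rw [hρ, map_add, htr a (ρ b)] at this
    rw [htr a (ρ b), htr b (ρ a)]
    linear_combination this
end

section
/- Let A be an associative algebra, \alpha : A \to A an algebra endomorphism with \alpha^2 = \alpha, and let {\cal A} = (A, \mu_\alpha, \alpha) be the induced Hom-associative algebra with a \star b = \alpha(ab). For an (n+1)-linear functional \varphi : A^{\otimes n+1} \to k define \varphi_\alpha(a_0 \otimes ... \otimes a_n) = \varphi(\alpha(a_0) \otimes ... \otimes \alpha(a_n)). Then \varphi \mapsto \varphi_\alpha intertwines the Hochschild cofaces: \delta_i^{Hom}(\varphi_\alpha) = (\delta_i \varphi)_\alpha for each i, where \delta_i are the standard Hochschild cofaces of A and \delta_i^{Hom} those of {\cal A}. Moreover if \varphi is cyclic (\varphi(a_0 \otimes ... \otimes a_n) = (-1)^n \varphi(a_n \otimes a_0 \otimes ... \otimes a_{n-1})), so is \varphi_\alpha. -/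
/-- For `A` associative and `α` an idempotent algebra endomorphism, with
`{\cal A} = (A, μ_α, α)` and `a ⋆ b = α(ab)`, the map `φ ↦ φ_α`,
`φ_α(a_0 ⊗ … ⊗ a_n) = φ(α(a_0) ⊗ … ⊗ α(a_n))`, intertwines the Hochschild cofaces
(`δ_i^{Hom}(φ_α) = (δ_i φ)_α`), and preserves cyclicity. -/
theorem stmt_19 {k A : Type*} [Field k] [NonUnitalRing A] [Module k A]
    [SMulCommClass k A A] [IsScalarTower k A A]
    (α : A →ₗ[k] A) (hα : ∀ a b : A, α (a * b) = α a * α b)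
    (hidem : ∀ a : A, α (α a) = α a)
    (n : ℕ) (φ : MultilinearMap k (fun _ : Fin (n + 1) => A) k) :
    (∀ (i : Fin (n + 2)) (a : Fin (n + 2) → A),
      φ (fun j => α (cFace (⇑α) (fun x y => α (x * y)) n i a j)) =
      φ (cFace id (· * ·) n i (fun j => α (a j)))) ∧
    ((∀ a : Fin (n + 1) → A, φ a = ((-1 : k) ^ n) * φ (fun j => a (j - 1))) →
      ∀ a : Fin (n + 1) → A,
        φ (fun j => α (a j)) = ((-1 : k) ^ n) * φ (fun j => α (a (j - 1)))) := by
  constructor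
  · intro i a
    congr 1
    funext j
    unfold cFace
    split_ifs <;> (beta_reduce; split_ifs <;> simp [hidem, hα])
  · intro hc a
    exact hc fun j => α (a j)
end
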